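/- arXiv:2006.08522 — 2 statements merged into one kernel-verified Lean document; each statement's English description precedes it below -/
import Mathlib

section
/- The Laplace mechanism satisfies ε-differential privacy: if S : X^n → ℝ has global sensitivity Δ (i.e. |S(D) - S(D')| ≤ Δ for all neighboring databases D, D'), then the mechanism that outputs S(D) + U, where U has density f(u) = (ε/(2Δ)) exp(-ε|u|/Δ), satisfies that for all neighboring D, D' and all measurable sets A, P(S(D)+U ∈ A) ≤ e^ε · P(S(D')+U ∈ A). -/
/-!
By the triangle inequality, moving the centre of a Laplace density of scale `Δ / ε` by at most `Δ`
changes it pointwise by a factor of at most `exp ε`. Integrating this pointwise bound over any set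
bounds the output distribution of `D` by `exp ε` times that of `D'`.
-/

open MeasureTheory Real

theorem MeasureTheory.withDensity_le_smul_withDensity {α : Type*} [MeasurableSpace α]
    {μ : Measure α} {f g : α → ENNReal} {c : ENNReal} (hc : c ≠ ⊤) (hfg : ∀ᵐ a ∂μ, f a ≤ c * g a) :
    μ.withDensity f ≤ c • μ.withDensity g := by
  rw [← withDensity_smul' c g hc]
  exact withDensity_mono hfg

theorem Real.exp_neg_mul_abs_sub_le {r : ℝ} (hr : 0 ≤ r) (a s t : ℝ) :
    exp (-(r * |a - s|)) ≤ exp (r * |s - t|) * exp (-(r * |a - t|)) := by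
  rw [← exp_add, exp_le_exp]
  have htri : |a - t| - |a - s| ≤ |s - t| := by
    simpa using abs_sub_abs_le_abs_sub (a - t) (a - s)
  nlinarith [mul_le_mul_of_nonneg_left htri hr]

theorem laplace_density_le_exp_mul {ε Δ s t : ℝ} (hε : 0 ≤ ε) (hΔ : 0 < Δ) (hst : |s - t| ≤ Δ)
    (a : ℝ) :
    ENNReal.ofReal (ε / (2 * Δ) * exp (-(ε * |a - s|) / Δ)) ≤
      ENNReal.ofReal (exp ε) * ENNReal.ofReal (ε / (2 * Δ) * exp (-(ε * |a - t|) / Δ)) := by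
  rw [← ENNReal.ofReal_mul (exp_pos ε).le]
  refine ENNReal.ofReal_le_ofReal ?_
  have hrate : 0 ≤ ε / Δ := div_nonneg hε hΔ.le
  have hshift : exp (ε / Δ * |s - t|) ≤ exp ε := by
    rw [exp_le_exp, div_mul_eq_mul_div, div_le_iff₀ hΔ]
    exact mul_le_mul_of_nonneg_left hst hε
  simp only [neg_div, mul_div_right_comm ε]
  calc ε / (2 * Δ) * exp (-(ε / Δ * |a - s|))
      ≤ ε / (2 * Δ) * (exp (ε / Δ * |s - t|) * exp (-(ε / Δ * |a - t|))) := by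
        gcongr
        exact exp_neg_mul_abs_sub_le hrate a s t
    _ ≤ ε / (2 * Δ) * (exp ε * exp (-(ε / Δ * |a - t|))) := by gcongr
    _ = exp ε * (ε / (2 * Δ) * exp (-(ε / Δ * |a - t|))) := by ring

theorem laplace_mechanism_dp_general {X : Type*} {n : ℕ} (ε Δ : ℝ) (hε : 0 < ε) (hΔ : 0 < Δ)
    (S : (Fin n → X) → ℝ)
    (hsens : ∀ D D' : Fin n → X, (∃! i, D i ≠ D' i) → |S D - S D'| ≤ Δ)
    (M : (Fin n → X) → Measure ℝ)
    (hM : ∀ D, M D = volume.withDensity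
      (fun a => ENNReal.ofReal (ε / (2 * Δ) * Real.exp (-(ε * |a - S D|) / Δ))))
    (D D' : Fin n → X) (hnbr : ∃! i, D i ≠ D' i) (A : Set ℝ) :
    M D A ≤ ENNReal.ofReal (Real.exp ε) * M D' A := by
  have hle : M D ≤ ENNReal.ofReal (exp ε) • M D' := by
    rw [hM, hM]
    exact withDensity_le_smul_withDensity ENNReal.ofReal_ne_top
      (ae_of_all _ (laplace_density_le_exp_mul hε.le hΔ (hsens D D' hnbr)))
  exact hle A

/-- The Laplace mechanism satisfies ε-differential privacy. -/
theorem laplace_mechanism_dp {X : Type*} {n : ℕ} (ε Δ : ℝ) (hε : 0 < ε) (hΔ : 0 < Δ)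
    (S : (Fin n → X) → ℝ)
    (hsens : ∀ D D' : Fin n → X, (∃! i, D i ≠ D' i) → |S D - S D'| ≤ Δ)
    (M : (Fin n → X) → Measure ℝ)
    (hM : ∀ D, M D = volume.withDensity
      (fun a => ENNReal.ofReal (ε / (2 * Δ) * Real.exp (-(ε * |a - S D|) / Δ))))
    (D D' : Fin n → X) (hnbr : ∃! i, D i ≠ D' i) (A : Set ℝ) (hA : MeasurableSet A) :
    M D A ≤ ENNReal.ofReal (Real.exp ε) * M D' A :=
  laplace_mechanism_dp_general ε Δ hε hΔ S hsens M hM D D' hnbr A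
end

section
/- The integer additive mechanism with double geometric noise satisfies ε-differential privacy for counting queries: if S : X^n → ℤ satisfies |S(D) − S(D')| ≤ 1 for neighboring D, D', then the mechanism outputting S(D) + U, where U is double geometric with parameter ε, satisfies for all neighboring D, D' and all integers a, P(S(D)+U = a) ≤ e^ε P(S(D')+U = a). -/
open Real

theorem exp_neg_mul_abs_le_exp_mul_abs_sub_mul {ε : ℝ} (hε : 0 ≤ ε) (u v : ℝ) :
    exp (-ε * |u|) ≤ exp (ε * |u - v|) * exp (-ε * |v|) := by
  rw [← exp_add, exp_le_exp]
  have hdist : |v| - |u| ≤ |u - v| := by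
    simpa only [abs_sub_comm v u] using abs_sub_abs_le_abs_sub v u
  linarith [mul_le_mul_of_nonneg_left hdist hε]

noncomputable def doubleGeometricMass (ε : ℝ) (u : ℤ) : ℝ :=
  (1 - exp (-ε)) / (1 + exp (-ε)) * exp (-ε * |(u : ℝ)|)

theorem doubleGeometricMass_normalizer_nonneg {ε : ℝ} (hε : 0 ≤ ε) :
    0 ≤ (1 - exp (-ε)) / (1 + exp (-ε)) := by
  have : exp (-ε) ≤ 1 := exp_le_one_iff.mpr (neg_nonpos.mpr hε)
  exact div_nonneg (by linarith) (by positivity)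

theorem doubleGeometricMass_le_exp_mul {ε : ℝ} (hε : 0 ≤ ε) (u v : ℤ) :
    doubleGeometricMass ε u ≤ exp (ε * |((u - v : ℤ) : ℝ)|) * doubleGeometricMass ε v := by
  unfold doubleGeometricMass
  rw [mul_left_comm, Int.cast_sub]
  exact mul_le_mul_of_nonneg_left (exp_neg_mul_abs_le_exp_mul_abs_sub_mul hε u v)
    (doubleGeometricMass_normalizer_nonneg hε)

theorem doubleGeometricMass_le_exp_mul_of_abs_sub_le_one {ε : ℝ} (hε : 0 ≤ ε) {u v : ℤ}
    (huv : |u - v| ≤ 1) : doubleGeometricMass ε u ≤ exp ε * doubleGeometricMass ε v := by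
  have hdist : ε * |((u - v : ℤ) : ℝ)| ≤ ε := by
    rw [← Int.cast_abs]
    exact mul_le_of_le_one_right hε (by exact_mod_cast huv)
  calc doubleGeometricMass ε u
      ≤ exp (ε * |((u - v : ℤ) : ℝ)|) * doubleGeometricMass ε v :=
        doubleGeometricMass_le_exp_mul hε u v
    _ ≤ exp ε * doubleGeometricMass ε v :=
        mul_le_mul_of_nonneg_right (exp_le_exp.mpr hdist)
          (mul_nonneg (doubleGeometricMass_normalizer_nonneg hε) (exp_pos _).le)

/-- The integer additive mechanism with double geometric noise is ε-DP for counting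
queries of sensitivity 1. -/
theorem double_geometric_mechanism_dp {X : Type*} {n : ℕ} (ε : ℝ) (hε : 0 < ε)
    (f : ℤ → ℝ)
    (hf : ∀ u : ℤ, f u = (1 - Real.exp (-ε)) / (1 + Real.exp (-ε)) * Real.exp (-ε * |(u : ℝ)|))
    (S : (Fin n → X) → ℤ)
    (hsens : ∀ D D' : Fin n → X, (∃! i, D i ≠ D' i) → |S D - S D'| ≤ 1) :
    ∀ D D' : Fin n → X, (∃! i, D i ≠ D' i) → ∀ a : ℤ,
      f (a - S D) ≤ Real.exp ε * f (a - S D') := by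
  intro D D' hneighbor a
  obtain rfl : f = doubleGeometricMass ε := funext hf
  apply doubleGeometricMass_le_exp_mul_of_abs_sub_le_one hε.le
  rw [sub_sub_sub_cancel_left, abs_sub_comm]
  exact hsens D D' hneighbor
end
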